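/- Let P be an exponentially localized orthogonal projection on L²(ℝ²) admitting a generalized Wannier basis {w_{γ,a}}_{γ∈𝔇, 1≤a≤m(γ)} which is s-localized around an r-uniformly discrete set 𝔇 ⊂ ℝ² for some s > 5. Then there exists a constant I_MO > 0 such that for every L ≥ 1: ∑_{ξ ∈ 𝔇 ∩ Λ_L} ∑_{1≤c≤m(ξ)} ‖χ_{Λ_L^c} w_{ξ,c}‖_{L²(ℝ²)} ≤ I_MO · L, where Λ_L = [−L,L]² and χ_{Λ_L^c} is the characteristic function of the complement of Λ_L. -/

import Mathlib

/-!
A Wannier function centred at `γ ∈ Λ_L` with sup-distance `d` to `Λ_Lᶜ` satisfies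
`‖x - γ‖ ≥ d` on `Λ_Lᶜ`, so `s`-localization bounds its mass outside `Λ_L` by
`√M / (1 + ⌊d⌋²)`. The centres with `⌊d⌋ = k` lie in a square shell of width one; being
uniformly discrete they number `O(L)`, each carrying at most `m_*` functions. Summing the
convergent series `∑ₖ 1 / (1 + k²)` against these `O(L)` counts gives the bound.
-/

open MeasureTheory Filter Topology

noncomputable section

abbrev R2 : Type := EuclideanSpace ℝ (Fin 2)

abbrev H2 : Type := MeasureTheory.Lp ℂ 2 (volume : Measure R2)

/-- `T` is an integral operator with kernel `k`. -/
def HasKernel (T : H2 →L[ℂ] H2) (k : R2 → R2 → ℂ) : Prop :=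
  ∀ f : H2, ∀ᵐ x : R2 ∂volume, (T f : R2 → ℂ) x = ∫ y : R2, k x y * (f : R2 → ℂ) y

/-- `P` is an orthogonal projection. -/
def IsOrthProj (P : H2 →L[ℂ] H2) : Prop := IsSelfAdjoint P ∧ P ∘L P = P

/-- `p` is a jointly continuous, exponentially localized kernel with constants `C`, `β`. -/
def IsExpLocKernel (p : R2 → R2 → ℂ) (C β : ℝ) : Prop :=
  Continuous (fun q : R2 × R2 => p q.1 q.2) ∧ 0 < C ∧ 0 < β ∧
    ∀ x y : R2, ‖p x y‖ ≤ C * Real.exp (-β * ‖x - y‖)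

/-- Hilbert-Schmidt operators on `L²(ℝ²)`. -/
def IsHilbertSchmidt (T : H2 →L[ℂ] H2) : Prop :=
  ∃ (w : Set H2) (b : HilbertBasis w ℂ H2), Summable fun i => ‖T (b i)‖ ^ 2

/-- Trace class operators, characterized as products of two Hilbert-Schmidt operators. -/
def IsTraceClass (T : H2 →L[ℂ] H2) : Prop :=
  ∃ A B : H2 →L[ℂ] H2, IsHilbertSchmidt A ∧ IsHilbertSchmidt B ∧ T = A ∘L B

def traceBasisIdx : Set H2 := (exists_hilbertBasis ℂ H2).choose

def traceBasis : HilbertBasis traceBasisIdx ℂ H2 := (exists_hilbertBasis ℂ H2).choose_spec.choose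

/-- The trace of an operator, computed in a fixed Hilbert basis of `L²(ℝ²)`.
For trace class operators this is the canonical trace for any choice of basis. -/
def opTrace (T : H2 →L[ℂ] H2) : ℂ :=
  ∑' i : traceBasisIdx, (inner ℂ (traceBasis i) (T (traceBasis i)) : ℂ)

/-- The square `Λ_L = [-L, L]²` in `ℝ²`. -/
def Lam (L : ℝ) : Set R2 := {x : R2 | |x 0| ≤ L ∧ |x 1| ≤ L}

/-- The characteristic function of `Λ_L`, with values in `ℂ`. -/
def indL (L : ℝ) (x : R2) : ℂ := (Lam L).indicator (fun _ => (1 : ℂ)) x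

/-- Formal composition of two integral kernels. -/
def kComp (k₁ k₂ : R2 → R2 → ℂ) : R2 → R2 → ℂ := fun x y => ∫ z : R2, k₁ x z * k₂ z y

/-- The kernel of the commutator `[X_i, P]`, when `P` has kernel `p`. -/
def commK (p : R2 → R2 → ℂ) (i : Fin 2) : R2 → R2 → ℂ :=
  fun x y => ((x i - y i : ℝ) : ℂ) * p x y

/-- The kernel of the double commutator `[[X₁,P],[X₂,P]]`, when `P` has kernel `p`. -/
def dcommK (p : R2 → R2 → ℂ) : R2 → R2 → ℂ :=
  fun x y => kComp (commK p 0) (commK p 1) x y - kComp (commK p 1) (commK p 0) x y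

/-- The kernel of `i χ_{Λ_L} P [[X₁,P],[X₂,P]] P χ_{Λ_L}`, when `P` has kernel `p`. -/
def chernK (p : R2 → R2 → ℂ) (L : ℝ) : R2 → R2 → ℂ :=
  fun x y => indL L x * (Complex.I * kComp p (kComp (dcommK p) p) x y) * indL L y

/-- A set `𝔇 ⊆ ℝ²` is `r`-uniformly discrete. -/
def UnifDiscrete (𝔇 : Set R2) (r : ℝ) : Prop :=
  0 < r ∧ ∀ x : R2, (𝔇 ∩ Metric.ball x r).Subsingleton

/-- The index set of a generalized Wannier basis. -/
abbrev WIdx (𝔇 : Set R2) (m : R2 → ℕ) : Type := Σ γ : 𝔇, Fin (m (γ : R2))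

/-- `w` is a generalized Wannier basis for `P`, `G`-localized around `𝔇`
with localization constant `M` and uniform multiplicity bound `mStar`. -/
def IsGWB (P : H2 →L[ℂ] H2) (𝔇 : Set R2) (m : R2 → ℕ) (mStar : ℕ)
    (w : (γ : R2) → Fin (m γ) → H2) (G : ℝ → ℝ) (M : ℝ) : Prop :=
  (∀ γ ∈ 𝔇, m γ ≤ mStar) ∧
  Orthonormal ℂ (fun σ : WIdx 𝔇 m => w (σ.1 : R2) σ.2) ∧
  (∀ γ ∈ 𝔇, ∀ a, P (w γ a) = w γ a) ∧
  (∀ f : H2, P f = f → (∀ (γ : R2), γ ∈ 𝔇 → ∀ a, (inner ℂ (w γ a) f : ℂ) = 0) → f = 0) ∧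
  (∀ γ ∈ 𝔇, ∀ a, ∫⁻ x : R2,
      (‖(w γ a : R2 → ℂ) x‖₊ : ENNReal) ^ 2 * ENNReal.ofReal (G ‖x - γ‖)
      ≤ ENNReal.ofReal M)

/-- The Japanese bracket `⟨x⟩ = (1+‖x‖²)^{1/2}` on `ℝ²`. -/
def jap (x : R2) : ℝ := Real.sqrt (1 + ‖x‖ ^ 2)

/-- The Japanese bracket `⟨t⟩ = (1+t²)^{1/2}` on `ℝ`. -/
def japR (t : ℝ) : ℝ := Real.sqrt (1 + t ^ 2)

open Finset

open scoped ENNReal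

lemma norm_lt_of_forall_abs_apply_lt {v : R2} {r : ℝ} (hv : ∀ j, |v j| < r / 2) : ‖v‖ < r := by
  have hr : 0 < r := by linarith [abs_nonneg (v 0), hv 0]
  rw [← sq_lt_sq₀ (norm_nonneg _) hr.le, EuclideanSpace.real_norm_sq_eq, Fin.sum_univ_two,
    ← sq_abs (v 0), ← sq_abs (v 1)]
  nlinarith [hv 0, hv 1, abs_nonneg (v 0), abs_nonneg (v 1)]

lemma Nat.abs_sub_lt_one_of_floor_eq_floor {u v : ℝ} (hu : 0 ≤ u) (hv : 0 ≤ v)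
    (h : ⌊u⌋₊ = ⌊v⌋₊) : |u - v| < 1 :=
  Int.abs_sub_lt_one_of_floor_eq_floor <| by
    rw [← Int.natCast_floor_eq_floor hu, ← Int.natCast_floor_eq_floor hv, h]

lemma mem_Lam_iff {L : ℝ} {x : R2} : x ∈ Lam L ↔ ∀ j, |x j| ≤ L := by
  simp [Lam, Fin.forall_fin_two]

lemma isClosed_Lam (L : ℝ) : IsClosed (Lam L) :=
  show IsClosed ({x : R2 | |x 0| ≤ L} ∩ {x | |x 1| ≤ L}) from
    (isClosed_le (by fun_prop) continuous_const).inter (isClosed_le (by fun_prop) continuous_const)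

/-- The sup-norm distance from `x` to the complement of `Λ_L`. -/
def depthInLam (L : ℝ) (x : R2) : ℝ := L - max |x 0| |x 1|

lemma depthInLam_nonneg {L : ℝ} {x : R2} (hx : x ∈ Lam L) : 0 ≤ depthInLam L x :=
  sub_nonneg.2 (max_le hx.1 hx.2)

lemma depthInLam_le_norm_sub {L : ℝ} {x γ : R2} (hx : x ∉ Lam L) :
    depthInLam L γ ≤ ‖x - γ‖ := by
  obtain ⟨i, hi⟩ : ∃ i, L < |x i| := by
    by_contra! h
    exact hx (mem_Lam_iff.2 h)
  have hγi : |γ i| ≤ max |γ 0| |γ 1| := by fin_cases i <;> simp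
  calc depthInLam L γ ≤ |x i| - |γ i| := by unfold depthInLam; linarith
    _ ≤ |(x - γ) i| := abs_sub_abs_le_abs_sub _ _
    _ ≤ ‖x - γ‖ := by simpa using PiLp.norm_apply_le (x - γ) i

namespace UnifDiscrete

variable {𝔇 : Set R2} {r : ℝ}

/-- Cells of side `r / 2` have diameter `< r`, so each contains at most one point of `𝔇`. -/
theorem card_le_prod_of_forall_mem_Icc (h𝔇 : UnifDiscrete 𝔇 r) {S : Finset R2} (hS : ↑S ⊆ 𝔇)
    {a b : Fin 2 → ℝ} (hab : a ≤ b) (hSab : ∀ x ∈ S, ∀ j, x j ∈ Set.Icc (a j) (b j)) :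
    (#S : ℝ) ≤ ∏ j, (2 * (b j - a j) / r + 1) := by
  obtain ⟨hr, hsub⟩ := h𝔇
  have ht : 0 < r / 2 := by positivity
  let cell : R2 → Fin 2 → ℕ := fun x j => ⌊(x j - a j) / (r / 2)⌋₊
  have hcoord : ∀ x ∈ S, ∀ j, 0 ≤ (x j - a j) / (r / 2) := fun x hx j =>
    div_nonneg (sub_nonneg.2 (hSab x hx j).1) ht.le
  have hinj : Set.InjOn cell S := by
    intro x hx y hy hxy
    refine hsub x ⟨hS hx, Metric.mem_ball_self hr⟩ ⟨hS hy, ?_⟩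
    rw [Metric.mem_ball, dist_eq_norm]
    refine norm_lt_of_forall_abs_apply_lt fun j => ?_
    have h := Nat.abs_sub_lt_one_of_floor_eq_floor (hcoord y hy j) (hcoord x hx j)
      (congrFun hxy j).symm
    rwa [← sub_div, sub_sub_sub_cancel_right, abs_div, abs_of_pos ht, div_lt_one ht] at h
  have hmaps :
      S.image cell ⊆ Fintype.piFinset fun j => range (⌊(b j - a j) / (r / 2)⌋₊ + 1) := by
    simp only [image_subset_iff, Fintype.mem_piFinset, mem_range, Nat.lt_succ_iff]
    exact fun x hx j => Nat.floor_le_floor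
      (div_le_div_of_nonneg_right (by linarith [(hSab x hx j).2]) ht.le)
  calc (#S : ℝ) = #(S.image cell) := by rw [card_image_of_injOn hinj]
    _ ≤ ∏ j, ((⌊(b j - a j) / (r / 2)⌋₊ : ℝ) + 1) := by
      exact_mod_cast (card_le_card hmaps).trans_eq (by simp [Fintype.card_piFinset])
    _ ≤ ∏ j, (2 * (b j - a j) / r + 1) := by
      gcongr with j
      calc (⌊(b j - a j) / (r / 2)⌋₊ : ℝ) ≤ (b j - a j) / (r / 2) :=
            Nat.floor_le (div_nonneg (sub_nonneg.2 (hab j)) ht.le)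
        _ = 2 * (b j - a j) / r := by field_simp

theorem card_le_of_forall_mem_strip (h𝔇 : UnifDiscrete 𝔇 r) {S : Finset R2} (hS : ↑S ⊆ 𝔇)
    {L c : ℝ} (hL : 0 ≤ L) (i : Fin 2) (hSc : ∀ x ∈ S, x ∈ Lam L ∧ x i ∈ Set.Icc c (c + 1)) :
    (#S : ℝ) ≤ (2 / r + 1) * (4 * L / r + 1) := by
  have hbox := h𝔇.card_le_prod_of_forall_mem_Icc hS
    (a := Function.update (fun _ => -L) i c) (b := Function.update (fun _ => L) i (c + 1))
    (fun j => by
      by_cases hj : j = i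
      · simp [hj]
      · simp [hj]; linarith)
    (fun x hx j => by
      by_cases hj : j = i
      · subst hj; simpa using (hSc x hx).2
      · simpa [Function.update_apply, hj, abs_le] using mem_Lam_iff.1 (hSc x hx).1 j)
  convert hbox using 1
  fin_cases i <;> simp [Fin.prod_univ_two, -mul_eq_mul_left_iff] <;> ring

theorem card_le_of_forall_mem_shell (h𝔇 : UnifDiscrete 𝔇 r) {S : Finset R2} (hS : ↑S ⊆ 𝔇)
    {L c : ℝ} (hL : 0 ≤ L) (hSc : ∀ x ∈ S, x ∈ Lam L ∧ max |x 0| |x 1| ∈ Set.Icc c (c + 1)) :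
    (#S : ℝ) ≤ 4 * ((2 / r + 1) * (4 * L / r + 1)) := by
  classical
  let strip : Fin 2 × ℝ → Finset R2 := fun ia =>
    S.filter fun x => x ia.1 ∈ Set.Icc ia.2 (ia.2 + 1)
  let I : Finset (Fin 2 × ℝ) := univ ×ˢ {c, -c - 1}
  have hcover : S ⊆ I.biUnion strip := by
    intro x hx
    obtain ⟨i, hi⟩ : ∃ i, max |x 0| |x 1| = |x i| :=
      (max_choice _ _).elim (fun h => ⟨0, h⟩) (fun h => ⟨1, h⟩)
    have hxi := (hSc x hx).2
    rw [hi] at hxi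
    simp only [I, strip, mem_biUnion, mem_product, mem_univ, true_and, mem_insert,
      mem_singleton, mem_filter, Prod.exists]
    rcases abs_cases (x i) with ⟨h, -⟩ | ⟨h, -⟩ <;> rw [h] at hxi
    · exact ⟨i, c, Or.inl rfl, hx, hxi⟩
    · exact ⟨i, -c - 1, Or.inr rfl, hx, by constructor <;> linarith [hxi.1, hxi.2]⟩
  have hI : #I ≤ 4 := by
    simpa [I, card_product] using Nat.mul_le_mul_left 2 (card_le_two (a := c) (b := -c - 1))
  have hr := h𝔇.1
  calc (#S : ℝ) ≤ ∑ ia ∈ I, (#(strip ia) : ℝ) := by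
        exact_mod_cast (card_le_card hcover).trans card_biUnion_le
    _ ≤ ∑ _ia ∈ I, (2 / r + 1) * (4 * L / r + 1) := sum_le_sum fun ia _ =>
        h𝔇.card_le_of_forall_mem_strip (fun x hx => hS (mem_filter.1 hx).1) hL ia.1
          fun x hx => ⟨(hSc x (mem_filter.1 hx).1).1, (mem_filter.1 hx).2⟩
    _ ≤ 4 * ((2 / r + 1) * (4 * L / r + 1)) := by
        rw [sum_const, nsmul_eq_mul]
        gcongr
        exact_mod_cast hI

end UnifDiscrete

lemma Finset.card_le_mul_card_image_fst {ι : Type*} [DecidableEq ι] {n : ι → ℕ} {N : ℕ}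
    (hn : ∀ i, n i ≤ N) (T : Finset (Σ i, Fin (n i))) : #T ≤ N * #(T.image Sigma.fst) :=
  calc #T ≤ #((T.image Sigma.fst).sigma fun i => (univ : Finset (Fin (n i)))) :=
        card_le_card fun σ hσ => mem_sigma.2 ⟨mem_image_of_mem _ hσ, mem_univ _⟩
    _ = ∑ i ∈ T.image Sigma.fst, n i := by simp [card_sigma]
    _ ≤ ∑ _i ∈ T.image Sigma.fst, N := sum_le_sum fun i _ => hn i
    _ = N * #(T.image Sigma.fst) := by rw [sum_const, smul_eq_mul, mul_comm]

theorem setIntegral_norm_sq_le_div {α E : Type*} [MeasurableSpace α] [NormedAddCommGroup E]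
    {μ : Measure α} {f : α → E} (hf : AEStronglyMeasurable f μ) {G : α → ℝ} {A : Set α}
    (hA : MeasurableSet A) {c M : ℝ} (hc : 0 < c) (hM : 0 ≤ M) (hGA : ∀ x ∈ A, c ≤ G x)
    (hfG : ∫⁻ x, (‖f x‖₊ : ℝ≥0∞) ^ 2 * ENNReal.ofReal (G x) ∂μ ≤ ENNReal.ofReal M) :
    ∫ x in A, ‖f x‖ ^ 2 ∂μ ≤ M / c := by
  have hlint : ENNReal.ofReal c * ∫⁻ x in A, ‖f x‖ₑ ^ 2 ∂μ ≤ ENNReal.ofReal M := calc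
    _ = ∫⁻ x in A, ENNReal.ofReal c * ‖f x‖ₑ ^ 2 ∂μ :=
        (lintegral_const_mul' _ _ ENNReal.ofReal_ne_top).symm
    _ ≤ ∫⁻ x in A, (‖f x‖₊ : ℝ≥0∞) ^ 2 * ENNReal.ofReal (G x) ∂μ :=
        setLIntegral_mono' hA fun x hx => by
          rw [mul_comm]; gcongr _ * ?_; exact ENNReal.ofReal_le_ofReal (hGA x hx)
    _ ≤ ENNReal.ofReal M := (setLIntegral_le_lintegral _ _).trans hfG
  rw [integral_eq_lintegral_of_nonneg_ae (f := fun x => ‖f x‖ ^ 2)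
    (ae_of_all _ fun x => by positivity) (hf.norm.pow 2).restrict]
  refine ENNReal.toReal_le_of_le_ofReal (div_nonneg hM hc.le) ?_
  rw [ENNReal.ofReal_div_of_pos hc, ENNReal.le_div_iff_mul_le
    (Or.inl (ENNReal.ofReal_pos.2 hc).ne') (Or.inl ENNReal.ofReal_ne_top), mul_comm]
  simpa [ENNReal.ofReal_pow, ofReal_norm] using hlint

theorem sqrt_integral_compl_Lam_le {f : H2} {γ : R2} {s M L : ℝ} (hs : 2 ≤ s) (hM : 0 ≤ M)
    (hf : ∫⁻ x : R2, (‖(f : R2 → ℂ) x‖₊ : ℝ≥0∞) ^ 2 * ENNReal.ofReal ((1 + ‖x - γ‖ ^ 2) ^ s)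
      ≤ ENNReal.ofReal M)
    {k : ℕ} (hk : (k : ℝ) ≤ depthInLam L γ) :
    √(∫ x in (Lam L)ᶜ, ‖(f : R2 → ℂ) x‖ ^ 2) ≤ √M / (1 + k ^ 2) := by
  have hint := setIntegral_norm_sq_le_div (Lp.aestronglyMeasurable f)
    (isClosed_Lam L).measurableSet.compl (c := (1 + k ^ 2) ^ 2) (by positivity) hM ?_ hf
  · calc √(∫ x in (Lam L)ᶜ, ‖(f : R2 → ℂ) x‖ ^ 2) ≤ √(M / (1 + k ^ 2) ^ 2) :=
          Real.sqrt_le_sqrt hint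
      _ = √M / (1 + k ^ 2) := by
          rw [Real.sqrt_div' _ (by positivity), Real.sqrt_sq (by positivity)]
  · intro x hx
    have hkx : (k : ℝ) ≤ ‖x - γ‖ := hk.trans (depthInLam_le_norm_sub hx)
    calc (1 + (k : ℝ) ^ 2) ^ 2 ≤ (1 + ‖x - γ‖ ^ 2) ^ 2 := by gcongr
      _ = (1 + ‖x - γ‖ ^ 2) ^ (2 : ℝ) := (Real.rpow_natCast _ 2).symm
      _ ≤ (1 + ‖x - γ‖ ^ 2) ^ s :=
        Real.rpow_le_rpow_of_exponent_le (le_add_of_nonneg_right (sq_nonneg _)) hs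

theorem Finset.sum_comp_le_mul_tsum {ι : Type*} (F : Finset ι) (K : ι → ℕ) {g : ℕ → ℝ}
    (hg : 0 ≤ g) (hgs : Summable g) {B : ℝ} (hB : ∀ k, (#(F.filter fun σ => K σ = k) : ℝ) ≤ B) :
    ∑ σ ∈ F, g (K σ) ≤ B * ∑' k, g k := by
  have hB0 : 0 ≤ B := (Nat.cast_nonneg _).trans (hB 0)
  calc ∑ σ ∈ F, g (K σ) = ∑ k ∈ F.image K, #(F.filter fun σ => K σ = k) • g k := sum_comp g K
    _ ≤ ∑ k ∈ F.image K, B * g k :=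
        sum_le_sum fun k _ => by rw [nsmul_eq_mul]; exact mul_le_mul_of_nonneg_right (hB k) (hg k)
    _ = B * ∑ k ∈ F.image K, g k := (mul_sum _ _ _).symm
    _ ≤ B * ∑' k, g k := mul_le_mul_of_nonneg_left (hgs.sum_le_tsum _ fun k _ => hg k) hB0

lemma summable_one_div_one_add_sq : Summable fun k : ℕ => 1 / (1 + (k : ℝ) ^ 2) := by
  refine (Real.summable_one_div_nat_pow.2 one_lt_two).of_norm_bounded_eventually_nat ?_
  filter_upwards [Filter.eventually_gt_atTop 0] with k hk
  rw [Real.norm_of_nonneg (by positivity)]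
  gcongr
  linarith

theorem card_filter_floor_depthInLam_le {𝔇 : Set R2} {r : ℝ} (h𝔇 : UnifDiscrete 𝔇 r)
    {m : R2 → ℕ} {mStar : ℕ} (hm : ∀ γ ∈ 𝔇, m γ ≤ mStar) {L : ℝ} (hL : 1 ≤ L)
    (F : Finset (WIdx 𝔇 m)) (hF : ∀ σ ∈ F, (σ.1 : R2) ∈ Lam L) (k : ℕ) :
    (#(F.filter fun σ => ⌊depthInLam L σ.1⌋₊ = k) : ℝ)
      ≤ mStar * (4 * ((2 / r + 1) * (4 / r + 1))) * L := by
  classical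
  set T := F.filter fun σ => ⌊depthInLam L σ.1⌋₊ = k
  set centers : Finset R2 := (T.image Sigma.fst).map (Function.Embedding.subtype _)
  have hT : (#T : ℝ) ≤ mStar * #centers := by
    rw [card_map]
    exact_mod_cast card_le_mul_card_image_fst (fun γ : 𝔇 => hm γ γ.2) T
  have hcenters : (#centers : ℝ) ≤ 4 * ((2 / r + 1) * (4 * L / r + 1)) := by
    refine h𝔇.card_le_of_forall_mem_shell (c := L - k - 1) ?_ (by linarith) ?_
    · intro x hx
      obtain ⟨γ, -, rfl⟩ := mem_map.1 hx
      exact γ.2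
    · intro x hx
      obtain ⟨γ, hγ, rfl⟩ := mem_map.1 hx
      obtain ⟨σ, hσ, rfl⟩ := mem_image.1 hγ
      obtain ⟨hσF, hσk⟩ := mem_filter.1 hσ
      have hd := depthInLam_nonneg (hF σ hσF)
      have h1 := Nat.floor_le hd
      have h2 := Nat.lt_floor_add_one (depthInLam L σ.1)
      rw [hσk] at h1 h2
      unfold depthInLam at h1 h2
      simp only [Function.Embedding.coe_subtype, Set.mem_Icc]
      exact ⟨hF σ hσF, by linarith, by linarith⟩
  have hr := h𝔇.1
  calc (#T : ℝ) ≤ mStar * (4 * ((2 / r + 1) * (4 * L / r + 1))) :=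
        hT.trans (mul_le_mul_of_nonneg_left hcenters (Nat.cast_nonneg _))
    _ ≤ mStar * (4 * ((2 / r + 1) * ((4 / r + 1) * L))) := by
        gcongr
        rw [add_mul, one_mul, div_mul_eq_mul_div, mul_comm 4 L]
        linarith
    _ = mStar * (4 * ((2 / r + 1) * (4 / r + 1))) * L := by ring

theorem statement_10_general
    (P : H2 →L[ℂ] H2)
    (𝔇 : Set R2) (r : ℝ) (h𝔇 : UnifDiscrete 𝔇 r)
    (s : ℝ) (hs : 5 < s)
    (m : R2 → ℕ) (mStar : ℕ) (w : (γ : R2) → Fin (m γ) → H2) (M : ℝ)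
    (hGWB : IsGWB P 𝔇 m mStar w (fun t => (1 + t ^ 2) ^ s) M) :
    ∃ IMO : ℝ, 0 < IMO ∧ ∀ L : ℝ, 1 ≤ L →
      ∀ F : Finset (WIdx 𝔇 m), (∀ σ ∈ F, (σ.1 : R2) ∈ Lam L) →
        ∑ σ ∈ F, Real.sqrt (∫ x in (Lam L)ᶜ, ‖(w (σ.1 : R2) σ.2 : R2 → ℂ) x‖ ^ 2)
          ≤ IMO * L := by
  obtain ⟨hm, -, -, -, hloc⟩ := hGWB
  have hr := h𝔇.1
  set B : ℝ := mStar * (4 * ((2 / r + 1) * (4 / r + 1)))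
  set Z : ℝ := ∑' k : ℕ, 1 / (1 + (k : ℝ) ^ 2)
  have hZ : 0 ≤ Z := tsum_nonneg fun k => by positivity
  refine ⟨B * √(max M 0) * Z + 1, by positivity, fun L hL F hF => ?_⟩
  let K : WIdx 𝔇 m → ℕ := fun σ => ⌊depthInLam L σ.1⌋₊
  calc ∑ σ ∈ F, √(∫ x in (Lam L)ᶜ, ‖(w (σ.1 : R2) σ.2 : R2 → ℂ) x‖ ^ 2)
      ≤ ∑ σ ∈ F, √(max M 0) * (1 / (1 + (K σ : ℝ) ^ 2)) := sum_le_sum fun σ hσ => by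
        rw [mul_one_div]
        exact sqrt_integral_compl_Lam_le (by linarith) (le_max_right _ _)
          ((hloc _ σ.1.2 σ.2).trans (ENNReal.ofReal_le_ofReal (le_max_left _ _)))
          (Nat.floor_le (depthInLam_nonneg (hF σ hσ)))
    _ = √(max M 0) * ∑ σ ∈ F, 1 / (1 + (K σ : ℝ) ^ 2) := (mul_sum _ _ _).symm
    _ ≤ √(max M 0) * ((B * L) * Z) := by
        gcongr
        exact F.sum_comp_le_mul_tsum K (fun k => by positivity) summable_one_div_one_add_sq
          (card_filter_floor_depthInLam_le h𝔇 hm hL F hF)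
    _ ≤ (B * √(max M 0) * Z + 1) * L := by nlinarith

/-- mass outside. For a GWB of an exponentially localized projection which is
`s`-localized around an `r`-uniformly discrete set `𝔇` with `s > 5`, there is `I_MO > 0` such
that for every `L ≥ 1` the sum over `ξ ∈ 𝔇 ∩ Λ_L` (and `1 ≤ c ≤ m(ξ)`) of
`‖χ_{Λ_L^c} w_{ξ,c}‖_{L²}` is at most `I_MO · L`. -/
theorem statement_10
    (P : H2 →L[ℂ] H2) (hP : IsOrthProj P)
    (p : R2 → R2 → ℂ) (C β : ℝ) (hp : IsExpLocKernel p C β) (hker : HasKernel P p)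
    (𝔇 : Set R2) (r : ℝ) (h𝔇 : UnifDiscrete 𝔇 r)
    (s : ℝ) (hs : 5 < s)
    (m : R2 → ℕ) (mStar : ℕ) (w : (γ : R2) → Fin (m γ) → H2) (M : ℝ)
    (hGWB : IsGWB P 𝔇 m mStar w (fun t => (1 + t ^ 2) ^ s) M) :
    ∃ IMO : ℝ, 0 < IMO ∧ ∀ L : ℝ, 1 ≤ L →
      ∀ F : Finset (WIdx 𝔇 m), (∀ σ ∈ F, (σ.1 : R2) ∈ Lam L) →
        ∑ σ ∈ F, Real.sqrt (∫ x in (Lam L)ᶜ, ‖(w (σ.1 : R2) σ.2 : R2 → ℂ) x‖ ^ 2)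
          ≤ IMO * L :=
  statement_10_general P 𝔇 r h𝔇 s hs m mStar w M hGWB

end
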